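/- Let (F_k)_{k≥0} be real numbers indexed by the cells A^(k)_i (0 ≤ i < 4^k), with F(A^(0)_0) =: F_0 < ∞ and all F(A^(k)_i) ≥ 0. Let μ be a probability measure with masses μ(A^(k)_i), μ(A^(0)_0) = 1. Suppose for every k ≥ 1 and 0 ≤ i < 4^(k-1): (μ(A^(k-1)_i))^(1/2)·F(A^(k-1)_i) ≥ (1/64)·2^(-k)·Σ_{j=0}^3 (μ(A^(k)_{4i+j}))^(1/2)·1[4i+j ∈ I(k)] + Σ_{j=0}^3 (μ(A^(k)_{4i+j}))^(1/2)·F(A^(k)_{4i+j}). Then Σ_{k=1}^∞ 2^(-k) Σ_{i=0}^{4^k-1} (μ(A^(k)_i))^(1/2)·1[i ∈ I(k)] ≤ 64·F_0. -/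

import Mathlib

/-
Let `S k = ∑ᵢ μ(A⁽ᵏ⁾ᵢ)^{1/2} F(A⁽ᵏ⁾ᵢ)` be the total weight of level `k` of the tree. Summing the
hypothesis over the parents `i` at level `k - 1` shows that passing from level `k - 1` to level `k`
loses at least `1/64` of the `k`-th term of the series, so telescoping gives
`(1/64) ∑_{k ≤ n} (k-th term) + S n ≤ S 0 = F₀`, and `S n ≥ 0` finishes the bound.
-/

open Finset

theorem Finset.sum_range_mul_eq_sum_sum {M : Type*} [AddCommMonoid M] (f : ℕ → M) (b n : ℕ) :
    ∑ i ∈ range (b * n), f i = ∑ i ∈ range n, ∑ j ∈ range b, f (b * i + j) := by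
  induction n with
  | zero => simp
  | succ n ih => rw [Nat.mul_succ, sum_range_add, ih, sum_range_succ]

theorem Finset.sum_range_pow_succ_le_of_forall_children_le {b k : ℕ} {f g : ℕ → ℝ}
    (h : ∀ i < b ^ k, ∑ j ∈ range b, f (b * i + j) ≤ g i) :
    ∑ i ∈ range (b ^ (k + 1)), f i ≤ ∑ i ∈ range (b ^ k), g i := by
  rw [pow_succ', sum_range_mul_eq_sum_sum]
  exact sum_le_sum fun i hi => h i (mem_range.mp hi)

theorem sum_range_add_le_of_add_le {g S : ℕ → ℝ} (h : ∀ n, g n + S (n + 1) ≤ S n) (n : ℕ) :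
    ∑ k ∈ range n, g k + S n ≤ S 0 := by
  induction n with
  | zero => simp
  | succ n ih => linarith [sum_range_succ g n, h n]

theorem tsum_le_of_add_le {g S : ℕ → ℝ} (hg : ∀ n, 0 ≤ g n) (hS : ∀ n, 0 ≤ S n)
    (h : ∀ n, g n + S (n + 1) ≤ S n) : ∑' n, g n ≤ S 0 :=
  Real.tsum_le_of_sum_range_le hg fun n => by linarith [sum_range_add_le_of_add_le h n, hS n]

open Classical in
theorem stmt16_general (F : ℕ → ℕ → ℝ) (m : ℕ → ℕ → ℝ)
    (hF : ∀ k i, i < 4 ^ k → 0 ≤ F k i) (hm0 : m 0 0 = 1)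
    (I : ℕ → Set ℕ)
    (hstep : ∀ k : ℕ, 1 ≤ k → ∀ i < 4 ^ (k - 1),
      (1/64) * (2:ℝ) ^ (-(k : ℤ)) *
          (∑ j ∈ Finset.range 4,
            if 4 * i + j ∈ I k then Real.sqrt (m k (4 * i + j)) else 0) +
        (∑ j ∈ Finset.range 4, Real.sqrt (m k (4 * i + j)) * F k (4 * i + j)) ≤
        Real.sqrt (m (k - 1) i) * F (k - 1) i) :
    (∑' k : ℕ, (2:ℝ) ^ (-(k : ℤ) - 1) *
        ∑ i ∈ Finset.range (4 ^ (k + 1)),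
          if i ∈ I (k + 1) then Real.sqrt (m (k + 1) i) else 0) ≤ 64 * F 0 0 := by
  set hit : ℕ → ℕ → ℝ := fun k i => if i ∈ I k then Real.sqrt (m k i) else 0
  set S : ℕ → ℝ := fun k => ∑ i ∈ range (4 ^ k), Real.sqrt (m k i) * F k i
  have hS : ∀ k, 0 ≤ S k := fun k =>
    sum_nonneg fun i hi => mul_nonneg (Real.sqrt_nonneg _) (hF k i (mem_range.mp hi))
  have hS0 : S 0 = F 0 0 := by simp [S, hm0]
  have hlevel : ∀ k : ℕ, (1/64) * ((2:ℝ) ^ (-(k : ℤ) - 1) * ∑ i ∈ range (4 ^ (k + 1)), hit (k + 1) i)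
      + S (k + 1) ≤ S k := fun k => by
    have hpow : (2:ℝ) ^ (-(k : ℤ) - 1) = 2 ^ (-((k + 1 : ℕ) : ℤ)) := by push_cast; ring_nf
    rw [hpow, ← mul_assoc, mul_sum, ← sum_add_distrib]
    refine sum_range_pow_succ_le_of_forall_children_le fun i hi => ?_
    rw [sum_add_distrib, ← mul_sum]
    exact hstep (k + 1) (Nat.le_add_left 1 k) i hi
  rw [← hS0, ← div_le_iff₀' (by norm_num), ← tsum_div_const]
  refine tsum_le_of_add_le (fun k => by positivity) hS fun k => ?_
  linarith [hlevel k]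

open Classical in
theorem stmt16 (F : ℕ → ℕ → ℝ) (m : ℕ → ℕ → ℝ)
    (hF : ∀ k i, i < 4 ^ k → 0 ≤ F k i) (hm : ∀ k i, 0 ≤ m k i) (hm0 : m 0 0 = 1)
    (I : ℕ → Set ℕ)
    (hstep : ∀ k : ℕ, 1 ≤ k → ∀ i < 4 ^ (k - 1),
      (1/64) * (2:ℝ) ^ (-(k : ℤ)) *
          (∑ j ∈ Finset.range 4,
            if 4 * i + j ∈ I k then Real.sqrt (m k (4 * i + j)) else 0) +
        (∑ j ∈ Finset.range 4, Real.sqrt (m k (4 * i + j)) * F k (4 * i + j)) ≤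
        Real.sqrt (m (k - 1) i) * F (k - 1) i) :
    (∑' k : ℕ, (2:ℝ) ^ (-(k : ℤ) - 1) *
        ∑ i ∈ Finset.range (4 ^ (k + 1)),
          if i ∈ I (k + 1) then Real.sqrt (m (k + 1) i) else 0) ≤ 64 * F 0 0 :=
  stmt16_general F m hF hm0 I hstep
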